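/- Let d ≥ 2 and g ∈ GL(d,ℝ). Assume there exist a nonzero vector v ∈ ℝ^d, a scalar c ∈ ℝ with g·v = c·v, a g-invariant linear subspace W with ℝ^d = ℝv ⊕ W, and constants 0 ≤ ρ < |c| and C₀ > 0 such that ‖gⁿ·x‖ ≤ C₀·ρⁿ·‖x‖ for all x ∈ W and all n ∈ ℕ (i.e. g is proximal in P(ℝ^d) with attracting fixed line ℝv). For each integer n ≥ 1 fix a singular value decomposition gⁿ = k(n)·diag(α(n))·k'(n). Then sin∠( k(n)·e₁ , v ) → 0 as n → ∞. -/

import Mathlib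

/-!
Put `w = k'(n)ᵀ e₁`. Then `gⁿ w = α(n)₀ • k(n) e₁`, and `α(n)₀ = ‖gⁿ‖ ≥ |c|ⁿ` because `v`
is an eigenvector. Split `w = t • v + y` with `y ∈ W`; the projection onto `W` along `ℝ v`
is continuous, so `‖y‖ ≤ B` uniformly in `n`. Since `gⁿ w - (t cⁿ) • v = gⁿ y`, the sine
of the angle between `k(n) e₁` and `v` is at most `‖gⁿ y‖ / α(n)₀ ≤ C₀ B (ρ / |c|)ⁿ → 0`.
-/

open Matrix

/-- The action of a `d × d` real matrix on Euclidean `ℝ^d`. -/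
noncomputable def appE {d : ℕ} (M : Matrix (Fin d) (Fin d) ℝ)
    (v : EuclideanSpace ℝ (Fin d)) : EuclideanSpace ℝ (Fin d) :=
  Matrix.toEuclideanLin M v

/-- `IsSVD g k α k'` means `g = k · diag(α) · k'` is a singular value decomposition:
`k, k'` are orthogonal and `α` is positive and nonincreasing. -/
def IsSVD {d : ℕ} (g k : Matrix (Fin d) (Fin d) ℝ) (α : Fin d → ℝ)
    (k' : Matrix (Fin d) (Fin d) ℝ) : Prop :=
  k * kᵀ = 1 ∧ k' * k'ᵀ = 1 ∧ (∀ i, 0 < α i) ∧ Antitone α ∧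
    g = k * Matrix.diagonal α * k'

/-- The sine of the angle between two vectors of Euclidean `ℝ^d`. -/
noncomputable def sinAngle {d : ℕ} (u v : EuclideanSpace ℝ (Fin d)) : ℝ :=
  Real.sin (InnerProductGeometry.angle u v)

/-- The first standard basis vector of Euclidean `ℝ^d`. -/
noncomputable def e1 {d : ℕ} (h : 0 < d) : EuclideanSpace ℝ (Fin d) :=
  EuclideanSpace.single ⟨0, h⟩ 1

open InnerProductGeometry
open scoped RealInnerProductSpace

theorem sin_angle_le_norm_sub_smul_div {E : Type*} [NormedAddCommGroup E]
    [InnerProductSpace ℝ E] {u : E} (hu : u ≠ 0) (v : E) (s : ℝ) :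
    Real.sin (angle u v) ≤ ‖u - s • v‖ / ‖u‖ := by
  rcases eq_or_ne v 0 with rfl | hv
  · simp [hu]
  rw [le_div_iff₀ (norm_pos_iff.2 hu), ← mul_le_mul_iff_left₀ (norm_pos_iff.2 hv), mul_assoc,
    sin_angle_mul_norm_mul_norm, Real.sqrt_le_iff]
  refine ⟨by positivity, ?_⟩
  -- the Gram determinant of `(u, v)` equals that of `(u - s • v, v)`
  have hgram : ⟪u, u⟫ * ⟪v, v⟫ - ⟪u, v⟫ * ⟪u, v⟫
      = (‖u - s • v‖ * ‖v‖) ^ 2 - (s * ⟪v, v⟫ - ⟪u, v⟫) ^ 2 := by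
    rw [mul_pow, ← real_inner_self_eq_norm_sq, ← real_inner_self_eq_norm_sq, inner_sub_sub_self,
      real_inner_smul_left, real_inner_smul_right, real_inner_smul_left, real_inner_smul_right,
      real_inner_comm v u]
    ring
  rw [hgram]
  nlinarith [sq_nonneg (s * ⟪v, v⟫ - ⟪u, v⟫)]

theorem Submodule.exists_decomposition_norm_le_of_isCompl {𝕜 E : Type*}
    [NontriviallyNormedField 𝕜] [CompleteSpace 𝕜] [NormedAddCommGroup E] [NormedSpace 𝕜 E]
    [FiniteDimensional 𝕜 E] {p q : Submodule 𝕜 E} (h : IsCompl p q) :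
    ∃ B, ∀ w, ∃ x ∈ p, ∃ y ∈ q, x + y = w ∧ ‖y‖ ≤ B * ‖w‖ := by
  obtain ⟨B, -, hB⟩ := (LinearMap.toContinuousLinearMap (q.projection p h.symm)).bound
  exact ⟨B, fun w => ⟨_, projection_apply_mem h w, _, projection_apply_mem h.symm w,
    p.projection_add_projection_eq_self h w, hB w⟩⟩

section MatrixAction

variable {d : ℕ}

theorem appE_add (A : Matrix (Fin d) (Fin d) ℝ) (x y : EuclideanSpace ℝ (Fin d)) :
    appE A (x + y) = appE A x + appE A y :=
  map_add _ x y

theorem appE_smul (A : Matrix (Fin d) (Fin d) ℝ) (t : ℝ) (x : EuclideanSpace ℝ (Fin d)) :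
    appE A (t • x) = t • appE A x :=
  map_smul _ t x

theorem appE_mul (A B : Matrix (Fin d) (Fin d) ℝ) (x : EuclideanSpace ℝ (Fin d)) :
    appE (A * B) x = appE A (appE B x) := by
  change toEuclideanCLM (n := Fin d) (𝕜 := ℝ) (A * B) x = _
  rw [map_mul]
  rfl

theorem appE_pow_of_appE_eq_smul {g : Matrix (Fin d) (Fin d) ℝ} {v : EuclideanSpace ℝ (Fin d)}
    {c : ℝ} (h : appE g v = c • v) (n : ℕ) : appE (g ^ n) v = c ^ n • v := by
  induction n with
  | zero => simp [appE]
  | succ n ih => rw [pow_succ, appE_mul, h, appE_smul, ih, smul_smul, pow_succ']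

theorem norm_appE_of_mul_transpose_eq_one {A : Matrix (Fin d) (Fin d) ℝ} (hA : A * Aᵀ = 1)
    (x : EuclideanSpace ℝ (Fin d)) : ‖appE A x‖ = ‖x‖ := by
  have hU : A ∈ unitary (Matrix (Fin d) (Fin d) ℝ) := by
    rw [← unitaryGroup, mem_unitaryGroup_iff, star_eq_conjTranspose,
      conjTranspose_eq_transpose_of_trivial, hA]
  exact ContinuousLinearMap.norm_map_of_mem_unitary
    (Unitary.map_mem (toEuclideanCLM (n := Fin d) (𝕜 := ℝ)) hU) x

theorem norm_appE_diagonal_le (β : Fin d → ℝ) (x : EuclideanSpace ℝ (Fin d)) :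
    ‖appE (diagonal β) x‖ ≤ ‖β‖ * ‖x‖ := by
  open scoped Matrix.Norms.L2Operator in
  calc ‖appE (diagonal β) x‖ ≤ ‖diagonal β‖ * ‖x‖ :=
        (toEuclideanCLM (𝕜 := ℝ) (diagonal β)).le_opNorm x
    _ = ‖β‖ * ‖x‖ := by rw [l2_opNorm_diagonal]

theorem norm_e1 (hd : 0 < d) : ‖e1 hd‖ = 1 := by
  simp [e1]

theorem appE_diagonal_e1 (β : Fin d → ℝ) (hd : 0 < d) :
    appE (diagonal β) (e1 hd) = β ⟨0, hd⟩ • e1 hd := by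
  ext i
  by_cases hi : i = ⟨0, hd⟩ <;> simp [appE, e1, toLpLin_apply, hi]

end MatrixAction

namespace IsSVD

variable {d : ℕ} {g k k' : Matrix (Fin d) (Fin d) ℝ} {α : Fin d → ℝ}

theorem norm_appE_le (h : IsSVD g k α k') (hd : 0 < d) (x : EuclideanSpace ℝ (Fin d)) :
    ‖appE g x‖ ≤ α ⟨0, hd⟩ * ‖x‖ := by
  obtain ⟨hk, hk', hα, hanti, rfl⟩ := h
  have hnorm : ‖α‖ ≤ α ⟨0, hd⟩ := (pi_norm_le_iff_of_nonneg (hα _).le).2 fun i => by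
    rw [Real.norm_of_nonneg (hα i).le]
    exact hanti (Nat.zero_le i.val)
  rw [appE_mul, appE_mul, norm_appE_of_mul_transpose_eq_one hk,
    ← norm_appE_of_mul_transpose_eq_one hk' x]
  exact (norm_appE_diagonal_le α _).trans (by gcongr)

theorem appE_transpose_e1 (h : IsSVD g k α k') (hd : 0 < d) :
    appE g (appE k'ᵀ (e1 hd)) = α ⟨0, hd⟩ • appE k (e1 hd) := by
  obtain ⟨-, hk', -, -, rfl⟩ := h
  rw [← appE_mul, Matrix.mul_assoc, hk', Matrix.mul_one, appE_mul, appE_diagonal_e1, appE_smul]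

theorem norm_appE_transpose_e1 (h : IsSVD g k α k') (hd : 0 < d) :
    ‖appE k'ᵀ (e1 hd)‖ = 1 := by
  have horth : k'ᵀ * k'ᵀᵀ = 1 := by rw [transpose_transpose]; exact mul_eq_one_comm.1 h.2.1
  rw [norm_appE_of_mul_transpose_eq_one horth, norm_e1]

theorem abs_le_of_appE_eq_smul (h : IsSVD g k α k') (hd : 0 < d) {v : EuclideanSpace ℝ (Fin d)}
    (hv : v ≠ 0) {μ : ℝ} (hgv : appE g v = μ • v) : |μ| ≤ α ⟨0, hd⟩ := by
  have := h.norm_appE_le hd v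
  rw [hgv, norm_smul, Real.norm_eq_abs] at this
  exact le_of_mul_le_mul_right this (norm_pos_iff.2 hv)

theorem sinAngle_le (h : IsSVD g k α k') (hd : 0 < d) {v y : EuclideanSpace ℝ (Fin d)}
    (hv : v ≠ 0) {μ t : ℝ} (hμ : μ ≠ 0) (hgv : appE g v = μ • v)
    (hw : t • v + y = appE k'ᵀ (e1 hd)) :
    sinAngle (appE k (e1 hd)) v ≤ ‖appE g y‖ / |μ| := by
  have hα : 0 < α ⟨0, hd⟩ := h.2.2.1 _
  have hke : ‖appE k (e1 hd)‖ = 1 := by rw [norm_appE_of_mul_transpose_eq_one h.1, norm_e1]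
  have hgw := h.appE_transpose_e1 hd
  set w := appE k'ᵀ (e1 hd)
  have hgw_norm : ‖appE g w‖ = α ⟨0, hd⟩ := by
    rw [hgw, norm_smul, hke, Real.norm_of_nonneg hα.le, mul_one]
  have hgw_ne : appE g w ≠ 0 := norm_ne_zero_iff.1 (hgw_norm ▸ hα.ne')
  calc sinAngle (appE k (e1 hd)) v = Real.sin (angle (appE g w) v) := by
        rw [sinAngle, hgw, angle_smul_left_of_pos _ _ hα]
    _ ≤ ‖appE g w - (t * μ) • v‖ / ‖appE g w‖ :=
        sin_angle_le_norm_sub_smul_div hgw_ne v _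
    _ = ‖appE g y‖ / α ⟨0, hd⟩ := by
        rw [hgw_norm, ← hw, appE_add, appE_smul, hgv, smul_smul, add_sub_cancel_left]
    _ ≤ ‖appE g y‖ / |μ| := div_le_div_of_nonneg_left (norm_nonneg _) (abs_pos.2 hμ)
        (h.abs_le_of_appE_eq_smul hd hv hgv)

end IsSVD

/-- If `g` is proximal in `P(ℝ^d)` with attracting fixed line `ℝv`, then the lines
`[k(n)·e₁]` given by singular value decompositions `gⁿ = k(n)·diag(α(n))·k'(n)` converge
to `[v]`: `sin∠(k(n)·e₁, v) → 0`. -/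
theorem stmt15 (d : ℕ) (hd : 2 ≤ d) (g : Matrix (Fin d) (Fin d) ℝ)
    (v : EuclideanSpace ℝ (Fin d)) (c : ℝ)
    (W : Submodule ℝ (EuclideanSpace ℝ (Fin d))) (ρ C₀ : ℝ)
    (hv : v ≠ 0) (heig : appE g v = c • v)
    (hcompl : IsCompl (Submodule.span ℝ {v}) W)
    (hρ0 : 0 ≤ ρ) (hρc : ρ < |c|) (hC₀ : 0 < C₀)
    (hdom : ∀ x ∈ W, ∀ n : ℕ, ‖appE (g ^ n) x‖ ≤ C₀ * ρ ^ n * ‖x‖)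
    (k : ℕ → Matrix (Fin d) (Fin d) ℝ) (α : ℕ → Fin d → ℝ)
    (k' : ℕ → Matrix (Fin d) (Fin d) ℝ)
    (hsvd : ∀ n : ℕ, 1 ≤ n → IsSVD (g ^ n) (k n) (α n) (k' n)) :
    Filter.Tendsto (fun n : ℕ => sinAngle (appE (k n) (e1 (by omega))) v)
      Filter.atTop (nhds 0) := by
  have hd0 : 0 < d := by omega
  have hc : 0 < |c| := hρ0.trans_lt hρc
  obtain ⟨B, hB⟩ := Submodule.exists_decomposition_norm_le_of_isCompl hcompl
  have hbound : ∀ n ≥ 1, sinAngle (appE (k n) (e1 hd0)) v ≤ C₀ * B * (ρ / |c|) ^ n := by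
    intro n hn
    obtain ⟨x, hx, y, hyW, hw, hy⟩ := hB (appE (k' n)ᵀ (e1 hd0))
    obtain ⟨t, rfl⟩ := Submodule.mem_span_singleton.1 hx
    rw [(hsvd n hn).norm_appE_transpose_e1, mul_one] at hy
    calc sinAngle (appE (k n) (e1 hd0)) v ≤ ‖appE (g ^ n) y‖ / |c ^ n| :=
          (hsvd n hn).sinAngle_le hd0 hv (pow_ne_zero n (abs_pos.1 hc))
            (appE_pow_of_appE_eq_smul heig n) hw
      _ ≤ C₀ * ρ ^ n * B / |c| ^ n := by
          rw [abs_pow]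
          gcongr
          exact (hdom y hyW n).trans (by gcongr)
      _ = C₀ * B * (ρ / |c|) ^ n := by rw [div_pow]; ring
  have hlim : Filter.Tendsto (fun n : ℕ => C₀ * B * (ρ / |c|) ^ n) Filter.atTop (nhds 0) := by
    simpa using (tendsto_pow_atTop_nhds_zero_of_lt_one (by positivity)
      ((div_lt_one hc).2 hρc)).const_mul (C₀ * B)
  refine squeeze_zero' (Filter.Eventually.of_forall fun n => sin_angle_nonneg _ _) ?_ hlim
  filter_upwards [Filter.eventually_ge_atTop 1] with n hn using hbound n hn
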